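/- Let w = p^k be a simple k-power with |p| = m, let x = p^{k+1}, and suppose x = u q^k v with |q| < m and u, v nonempty proper factors positioned so that q^k is a factor of some conjugate of w distinct from w. Then w contains a k-power as a proper factor, a contradiction; hence no conjugate of a simple k-power properly contains a k-power. -/

import Mathlib

/-- `p^k`: the word `p` concatenated `k` times. -/
def listPow {α : Type*} (p : List α) (k : ℕ) : List α := (List.replicate k p).flatten

/-- A `k`-power is a nonempty word of the form `p^k`. -/
def IsKPower {α : Type*} (k : ℕ) (w : List α) : Prop := ∃ p : List α, p ≠ [] ∧ w = listPow p k

/-- A simple `k`-power: a `k`-power none of whose proper factors is a `k`-power. -/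
def SimpleKPower {α : Type*} (k : ℕ) (w : List α) : Prop :=
  IsKPower k w ∧ ∀ y : List α, y <:+: w → y ≠ w → ¬ IsKPower k y

/-!
Write `u ++ v = p ^ k`, put `m = |p|` and let `f : ℕ → α` be the `m`-periodic extension of `p`, so that
`u ++ v` and `v ++ u` are windows of length `k m` of `f`. A `k`-power `q ^ k` occurring in `v ++ u` is a
window on which `f` has period `ℓ = |q| < m`, and by periodicity it may be moved to start at some `i < m`.
If it ends by `k m`, it is a proper factor of `u ++ v`. Otherwise it covers `[m, k m]`, so `f` has period
`ℓ` on `[0, (k - 1) m]`; together with the period `m` this gives `f (x + (m - ℓ)) = f (x - ℓ) = f x`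
for `x ≥ ℓ`, so the window of length `k (m - ℓ)` starting at `ℓ` is a `k`-power, again a proper factor
of `u ++ v`.
-/

open Function

section
variable {α : Type*}

theorem listPow_succ (p : List α) (n : ℕ) : listPow p (n + 1) = p ++ listPow p n := by
  simp [listPow, List.replicate_succ]

theorem listPow_succ' (p : List α) (n : ℕ) : listPow p (n + 1) = listPow p n ++ p := by
  simp [listPow, List.replicate_succ']

theorem length_listPow (p : List α) (n : ℕ) : (listPow p n).length = n * p.length := by
  simp [listPow]

theorem getElem_listPow_add_length {p : List α} {n t : ℕ}
    (h : t + p.length < (listPow p n).length) :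
    (listPow p n)[t + p.length] = (listPow p n)[t]'(by omega) := by
  cases n with
  | zero => simp [listPow] at h
  | succ n =>
    have ht : t < (listPow p n).length := by
      simp only [length_listPow] at h ⊢; rw [Nat.succ_mul] at h; omega
    calc (listPow p (n + 1))[t + p.length]
        = (p ++ listPow p n)[t + p.length]'(by simp; omega) :=
          List.getElem_of_eq (listPow_succ p n) _
      _ = (listPow p n ++ p)[t]'(by simp; omega) := by
          rw [List.getElem_append_right (by omega), List.getElem_append_left ht]; simp
      _ = (listPow p (n + 1))[t] := (List.getElem_of_eq (listPow_succ' p n) _).symm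

def window (f : ℕ → α) (a n : ℕ) : List α := (List.range' a n).map f

@[simp]
theorem length_window (f : ℕ → α) (a n : ℕ) : (window f a n).length = n := by
  simp [window]

@[simp]
theorem getElem_window (f : ℕ → α) (a n t : ℕ) (h : t < (window f a n).length) :
    (window f a n)[t] = f (a + t) := by
  simp [window]

theorem window_add (f : ℕ → α) (a n₁ n₂ : ℕ) :
    window f a (n₁ + n₂) = window f a n₁ ++ window f (a + n₁) n₂ := by
  simp only [window, ← List.range'_append_1, List.map_append]

theorem window_infix_window {f : ℕ → α} {a b n N : ℕ} (hab : a ≤ b) (hbN : b + n ≤ a + N) :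
    window f b n <:+: window f a N := by
  obtain ⟨c, rfl⟩ := Nat.exists_eq_add_of_le hab
  obtain ⟨e, rfl⟩ : ∃ e, N = c + n + e := ⟨N - (c + n), by omega⟩
  exact ⟨window f a c, window f (a + c + n) e, by rw [window_add, window_add, add_assoc a]⟩

theorem exists_eq_window_of_infix {f : ℕ → α} {a N : ℕ} {y : List α}
    (h : y <:+: window f a N) : ∃ b, y = window f b y.length := by
  obtain ⟨c, hc, hget⟩ := List.infix_iff_getElem?.1 h
  refine ⟨a + c, List.ext_getElem (by simp) fun j hj _ => ?_⟩
  have hyj := hget j hj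
  rw [List.getElem?_eq_getElem (by omega), getElem_window, Option.some_inj] at hyj
  rw [← hyj, getElem_window, add_comm j, add_assoc]

theorem Function.Periodic.window_mod {f : ℕ → α} {m : ℕ} (hf : Periodic f m) (a n : ℕ) :
    window f (a % m) n = window f a n := by
  refine List.ext_getElem (by simp) fun t _ _ => ?_
  rw [getElem_window, getElem_window, ← hf.map_mod_nat, ← hf.map_mod_nat (a + t), Nat.mod_add_mod]

theorem exists_periodic_window_eq {p : List α} (hp : p ≠ []) :
    ∃ (f : ℕ → α) (m : ℕ), 0 < m ∧ Periodic f m ∧ window f 0 m = p := by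
  have hm : 0 < p.length := List.length_pos_iff.2 hp
  refine ⟨fun n => p[n % p.length]'(Nat.mod_lt _ hm), p.length, hm,
    fun n => by simp, List.ext_getElem (by simp) fun t ht _ => ?_⟩
  simp [Nat.mod_eq_of_lt (by simpa using ht : t < p.length)]

def HasPeriodOn (f : ℕ → α) (d a n : ℕ) : Prop :=
  ∀ t, t + d < n → f (a + t + d) = f (a + t)

theorem Function.Periodic.hasPeriodOn {f : ℕ → α} {d : ℕ} (hf : Periodic f d) (a n : ℕ) :
    HasPeriodOn f d a n :=
  fun _ _ => hf _

theorem listPow_window {f : ℕ → α} {a d k : ℕ} (h : HasPeriodOn f d a (k * d)) :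
    listPow (window f a d) k = window f a (k * d) := by
  induction k generalizing a with
  | zero => simp [listPow, window]
  | succ k ih =>
    have htail : HasPeriodOn f d (a + d) (k * d) := fun t ht => by
      simpa [add_assoc, add_comm, add_left_comm] using h (d + t) (by nlinarith)
    rw [listPow_succ, show (k + 1) * d = d + k * d by ring, window_add, ← ih htail]
    rcases k.eq_zero_or_pos with rfl | hk
    · simp [listPow]
    have hshift : window f (a + d) d = window f a d :=
      List.ext_getElem (by simp) fun t ht _ => by
        simpa [add_right_comm] using h t (by simp at ht; nlinarith)
    rw [hshift]

theorem isKPower_window {f : ℕ → α} {a d k : ℕ} (hd : 0 < d) (h : HasPeriodOn f d a (k * d)) :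
    IsKPower k (window f a (k * d)) :=
  ⟨window f a d, by simpa [← List.length_pos_iff] using hd, (listPow_window h).symm⟩

theorem hasPeriodOn_of_window_eq_listPow {f : ℕ → α} {a n k : ℕ} {q : List α}
    (h : window f a n = listPow q k) : HasPeriodOn f q.length a n := by
  intro t ht
  have hlen : n = (listPow q k).length := by rw [← h, length_window]
  calc f (a + t + q.length)
      = (window f a n)[t + q.length]'(by simpa using ht) := by simp [add_assoc]
    _ = (listPow q k)[t + q.length] := List.getElem_of_eq h _
    _ = (listPow q k)[t] := getElem_listPow_add_length (by omega)
    _ = (window f a n)[t]'(by simp; omega) := (List.getElem_of_eq h _).symm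
    _ = f (a + t) := by simp

theorem hasPeriodOn_sub_of_straddle {f : ℕ → α} {m ℓ i k : ℕ} (hf : Periodic f m)
    (h : HasPeriodOn f ℓ i (k * ℓ)) (hi : i < m) (hstraddle : k * m < i + k * ℓ) :
    HasPeriodOn f (m - ℓ) ℓ (k * (m - ℓ)) := by
  have hℓ : ∀ x, x + ℓ + m ≤ k * m → f (x + ℓ) = f x := by
    intro x hx
    calc f (x + ℓ) = f (i + (x + m - i) + ℓ) := by rw [← hf]; congr 1; omega
      _ = f (i + (x + m - i)) := h _ (by omega)
      _ = f x := by rw [show i + (x + m - i) = x + m by omega, hf]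
  intro t ht
  rcases le_or_gt m ℓ with hmℓ | hℓm
  · simp [Nat.sub_eq_zero_of_le hmℓ] at ht
  obtain ⟨g, rfl⟩ : ∃ g, m = ℓ + g := ⟨m - ℓ, by omega⟩
  obtain _ | _ | j := k
  · simp at ht
  · simp at ht
  calc f (ℓ + t + (ℓ + g - ℓ)) = f (t + (ℓ + g)) := by congr 1; omega
    _ = f t := hf t
    _ = f (t + ℓ) := (hℓ t (by simp only [Nat.add_sub_cancel_left] at ht; nlinarith)).symm
    _ = f (ℓ + t) := by rw [add_comm]

theorem exists_kPower_infix_window {f : ℕ → α} {m ℓ i k : ℕ} (hf : Periodic f m) (hk : 0 < k)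
    (hℓ : 0 < ℓ) (hℓm : ℓ < m) (hi : i < m) (h : HasPeriodOn f ℓ i (k * ℓ)) :
    ∃ z, z <:+: window f 0 (k * m) ∧ z.length < k * m ∧ IsKPower k z := by
  by_cases hfit : i + k * ℓ ≤ k * m
  · exact ⟨_, window_infix_window (Nat.zero_le i) (by simpa using hfit),
      by simpa using Nat.mul_lt_mul_of_pos_left hℓm hk, isKPower_window hℓ h⟩
  · have hsub : k * (m - ℓ) < k * m := Nat.mul_lt_mul_of_pos_left (by omega) hk
    have hkℓ : ℓ ≤ k * ℓ := Nat.le_mul_of_pos_left ℓ hk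
    have hkm : k * ℓ ≤ k * m := Nat.mul_le_mul_left k hℓm.le
    refine ⟨_, window_infix_window (Nat.zero_le ℓ) ?_, by simpa using hsub,
      isKPower_window (Nat.sub_pos_of_lt hℓm) (hasPeriodOn_sub_of_straddle hf h hi (by omega))⟩
    rw [Nat.mul_sub] at hsub ⊢
    omega

end

theorem conjugate_of_simpleKPower_no_proper_kpower_general {α : Type*} (k : ℕ)
    (u v : List α) (h : SimpleKPower k (u ++ v)) :
    ∀ y : List α, y <:+: v ++ u → y ≠ v ++ u → ¬ IsKPower k y := by
  rintro y hy hyne ⟨q, hq, rfl⟩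
  obtain ⟨⟨p, hp, huv⟩, hsimple⟩ := h
  obtain ⟨f, m, hm, hf, rfl⟩ := exists_periodic_window_eq hp
  have hP : u ++ v = window f 0 (k * m) := huv.trans (listPow_window (hf.hasPeriodOn 0 _))
  have hPP : v ++ u <:+: window f 0 (k * m + k * m) := by
    refine ⟨u, v, ?_⟩
    rw [window_add, zero_add, ← hf.window_mod (k * m), Nat.mul_mod_left, ← hP]
    simp
  obtain ⟨b, hb⟩ := exists_eq_window_of_infix (hy.trans hPP)
  rw [← hf.window_mod, length_listPow] at hb
  have hlt : k * q.length < k * m := by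
    have hlen := congrArg List.length hP
    have hylt := hy.length_le.lt_of_ne fun e => hyne (hy.eq_of_length e)
    simp only [List.length_append, length_window, length_listPow] at hlen hylt
    omega
  obtain ⟨z, hzP, hzlen, hzk⟩ := exists_kPower_infix_window hf (Nat.pos_of_lt_mul_right hlt)
    (List.length_pos_iff.2 hq) (Nat.lt_of_mul_lt_mul_left hlt) (Nat.mod_lt b hm)
    (hasPeriodOn_of_window_eq_listPow hb.symm)
  exact hsimple z (hP ▸ hzP) (by rintro rfl; simp [hP] at hzlen) hzk

/-- No conjugate of a simple `k`-power properly contains a `k`-power: if `uv` is a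
simple `k`-power then no proper factor of the conjugate `vu` is a `k`-power. -/
theorem conjugate_of_simpleKPower_no_proper_kpower {α : Type*} (k : ℕ) (hk : 2 ≤ k)
    (u v : List α) (h : SimpleKPower k (u ++ v)) :
    ∀ y : List α, y <:+: v ++ u → y ≠ v ++ u → ¬ IsKPower k y :=
  conjugate_of_simpleKPower_no_proper_kpower_general k u v h
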